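/- arXiv:2404.14988 — 2 statements merged into one kernel-verified Lean document; each statement's English description precedes it below -/
import Mathlib

section
/- Suppose vectors q^a_i ∈ Q are given for a ∈ {1,2} and i ∈ {1, 2, 0, 1′, 2′}, satisfying α(q^a_{1′}, q^b_{2′}) + α(q^b_{1′}, q^a_{2′}) = 0 for all a, b ∈ {1,2}. Define A^{ab}_c = (1/3)(α(q^a_0, q^b_{c′}) + α(q^b_0, q^a_{c′})) for a, b, c ∈ {1,2}, and let H : ℝ⁵ → ℝ³ ⊕ Q ⊕ Q be the linear map sending the standard basis vectors ε₁, ε₂, ε₀, ε₁′, ε₂′ to H(ε_c) = ((A^{11}_c, A^{12}_c, A^{22}_c), q^1_c, q^2_c) for c ∈ {1,2} and H(ε_i) = ((0,0,0), q^1_i, q^2_i) for i ∈ {0, 1′, 2′}. If H is injective, then there exist a nonzero vector q ∈ Q and real numbers v^a_c (a, c ∈ {1,2}) with v^1_1·v^2_2 − v^1_2·v^2_1 ≠ 0 such that q^a_{c′} = v^a_c·q for all a, c ∈ {1,2}. (This is the algebraic core of the normalization of 1-jets of Pfaffian embeddings after the first integrability condition.) -/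
noncomputable section

open Module

/-- Normalization of 1-jets after the first integrability condition.

Here `Q` is a 2-dimensional real vector space with a nondegenerate alternating form `α`,
and `q a i ∈ Q` for `a ∈ {1,2}` and `i ∈ {1, 2, 0, 1′, 2′}` (indexed `0,…,4` in this
order) are the `Q`-valued components of the jet linearization map.  Assuming the first
integrability condition `α(qᵃ₁′, qᵇ₂′) + α(qᵇ₁′, qᵃ₂′) = 0` and injectivity of the
resulting jet linearization `H : ℝ⁵ → ℝ³ ⊕ Q ⊕ Q` (where
`A^{ab}_c = (1/3)(α(qᵃ₀, qᵇ_{c′}) + α(qᵇ₀, qᵃ_{c′}))`), the four vectors `qᵃ_{c′}` all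
lie on a single line `ℝ·q`, with an invertible matrix of coefficients. -/
theorem jet_normalization_core
    (Q : Type*) [AddCommGroup Q] [Module ℝ Q]
    (hQ : finrank ℝ Q = 2)
    (α : Q →ₗ[ℝ] Q →ₗ[ℝ] ℝ)
    (halt : ∀ x, α x x = 0)
    (hnd : ∀ x, (∀ y, α x y = 0) → x = 0)
    (q : Fin 2 → Fin 5 → Q)
    -- the first integrability condition
    (hint : ∀ a b : Fin 2, α (q a 3) (q b 4) + α (q b 3) (q a 4) = 0)
    (H : (Fin 5 → ℝ) →ₗ[ℝ] (Fin 3 → ℝ) × Q × Q)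
    -- values of H on the basis ε₁, ε₂, ε₀, ε₁′, ε₂′
    (hH0 : H (Pi.single 0 1) =
      (![(1/3) * (α (q 0 2) (q 0 3) + α (q 0 2) (q 0 3)),
         (1/3) * (α (q 0 2) (q 1 3) + α (q 1 2) (q 0 3)),
         (1/3) * (α (q 1 2) (q 1 3) + α (q 1 2) (q 1 3))], q 0 0, q 1 0))
    (hH1 : H (Pi.single 1 1) =
      (![(1/3) * (α (q 0 2) (q 0 4) + α (q 0 2) (q 0 4)),
         (1/3) * (α (q 0 2) (q 1 4) + α (q 1 2) (q 0 4)),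
         (1/3) * (α (q 1 2) (q 1 4) + α (q 1 2) (q 1 4))], q 0 1, q 1 1))
    (hH2 : H (Pi.single 2 1) = (0, q 0 2, q 1 2))
    (hH3 : H (Pi.single 3 1) = (0, q 0 3, q 1 3))
    (hH4 : H (Pi.single 4 1) = (0, q 0 4, q 1 4))
    (hinj : Function.Injective H) :
    ∃ qv : Q, qv ≠ 0 ∧
      ∃ v : Fin 2 → Fin 2 → ℝ,
        v 0 0 * v 1 1 - v 0 1 * v 1 0 ≠ 0 ∧
        (∀ a : Fin 2, q a 3 = v a 0 • qv) ∧
        (∀ a : Fin 2, q a 4 = v a 1 • qv) := by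

  -- antisymmetry of α
  have hskew : ∀ x y : Q, α y x = - α x y := by
    intro x y
    have h := halt (x + y)
    simp only [map_add, LinearMap.add_apply, halt] at h
    linarith
  -- dependence lemma: vanishing of α forces proportionality
  have hdep : ∀ x y : Q, x ≠ 0 → α x y = 0 → ∃ c : ℝ, y = c • x := by
    intro x y hx h0
    by_contra hc
    push_neg at hc
    have hli : LinearIndependent ℝ ![x, y] := by
      rw [LinearIndependent.pair_iff]
      intro s t hst
      have ht : t = 0 := by
        by_contra ht
        apply hc (-(t⁻¹ * s))
        have hy : t • y = -(s • x) := by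
          rw [eq_neg_iff_add_eq_zero]; rw [add_comm]; exact hst
        have := congrArg (fun z => t⁻¹ • z) hy
        simp only [smul_smul, inv_mul_cancel₀ ht, one_smul, smul_neg] at this
        rw [neg_smul]
        exact this
      have hs : s = 0 := by
        rw [ht, zero_smul, add_zero] at hst
        exact (smul_eq_zero.mp hst).resolve_right hx
      exact ⟨hs, ht⟩
    have hcard : Fintype.card (Fin 2) = finrank ℝ Q := by simp [hQ]
    let B := basisOfLinearIndependentOfCardEqFinrank hli hcard
    have hB : ⇑B = ![x, y] := coe_basisOfLinearIndependentOfCardEqFinrank hli hcard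
    have hzero : α x = 0 := by
      apply B.ext
      intro i
      fin_cases i <;> simp [hB, halt, h0]
    exact hx (hnd x fun w => by rw [hzero]; rfl)
  -- key injectivity consequence
  have key : ∀ l : ℝ, l • q 0 3 = q 0 4 → l • q 1 3 = q 1 4 → False := by
    intro l h1 h2
    set u : Fin 5 → ℝ := l • (Pi.single 3 1 : Fin 5 → ℝ) - (Pi.single 4 1 : Fin 5 → ℝ) with hu
    have hHz : H u = 0 := by
      rw [hu, map_sub, map_smul, hH3, hH4]
      rw [Prod.smul_mk, Prod.smul_mk, h1, h2]
      simp
    have h0 : u = 0 := hinj (by rw [hHz, map_zero])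
    have := congrFun h0 4
    rw [hu] at this
    simp [Pi.single_apply] at this
  -- q 0 3 and q 1 3 are not both zero
  have hne3 : ¬(q 0 3 = 0 ∧ q 1 3 = 0) := by
    rintro ⟨ha, hb⟩
    have hHz : H (Pi.single 3 1) = 0 := by rw [hH3, ha, hb]; rfl
    have h0 : (Pi.single 3 1 : Fin 5 → ℝ) = 0 := hinj (by rw [hHz, map_zero])
    have := congrFun h0 3
    simp [Pi.single_apply] at this
  by_cases h1 : q 0 3 = 0
  · -- Case A : q 0 3 = 0
    have h2 : q 1 3 ≠ 0 := fun h => hne3 ⟨h1, h⟩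
    have hα23 : α (q 1 3) (q 0 4) = 0 := by
      have := hint 0 1
      rw [h1] at this
      simpa using this
    obtain ⟨c3, hc3⟩ := hdep _ _ h2 hα23
    have hα24 : α (q 1 3) (q 1 4) = 0 := by have := hint 1 1; linarith
    obtain ⟨c4, hc4⟩ := hdep _ _ h2 hα24
    have hc3ne : c3 ≠ 0 := by
      intro h
      exact key c4 (by rw [h1, hc3, h]; simp) hc4.symm
    refine ⟨q 1 3, h2, ![![0, c3], ![1, c4]], ?_, ?_, ?_⟩
    · simpa using hc3ne
    · intro a; fin_cases a <;> simp [h1, hc3]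
    · intro a; fin_cases a <;> simp [hc3, hc4]
  · -- q 0 3 ≠ 0
    have hα13 : α (q 0 3) (q 0 4) = 0 := by have := hint 0 0; linarith
    obtain ⟨l3, hl3⟩ := hdep _ _ h1 hα13
    by_cases h2 : ∃ c : ℝ, q 1 3 = c • q 0 3
    · -- Case B
      obtain ⟨c, hc⟩ := h2
      have hw4 : ∃ μ : ℝ, q 1 4 = μ • q 0 3 := by
        by_cases hcz : c = 0
        · have hthis := hint 0 1
          rw [hc, hcz, zero_smul] at hthis
          simp only [map_zero, LinearMap.zero_apply, add_zero] at hthis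
          exact hdep _ _ h1 hthis
        · have h24 : α (q 1 3) (q 1 4) = 0 := by have := hint 1 1; linarith
          rw [hc] at h24
          simp only [map_smul, LinearMap.smul_apply, smul_eq_mul] at h24
          rcases mul_eq_zero.mp h24 with h | h
          · exact absurd h hcz
          · exact hdep _ _ h1 h
      obtain ⟨μ, hμ⟩ := hw4
      have hdet : μ - l3 * c ≠ 0 := by
        intro h
        apply key l3 hl3.symm
        rw [hc, hμ, smul_smul]
        congr 1
        linarith
      refine ⟨q 0 3, h1, ![![1, l3], ![c, μ]], ?_, ?_, ?_⟩
      · simp only [Matrix.cons_val', Matrix.cons_val_zero, Matrix.cons_val_one,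
          Matrix.head_cons, Matrix.head_fin_const, Matrix.empty_val',
          Matrix.cons_val_fin_one, one_mul]
        exact hdet
      · intro a; fin_cases a <;> simp [hc]
      · intro a; fin_cases a <;> simp [hl3, hμ]
    · -- Case C : impossible
      exfalso
      push_neg at h2
      have h2' : q 1 3 ≠ 0 := fun h => h2 0 (by simp [h])
      have h12ne : α (q 0 3) (q 1 3) ≠ 0 := by
        intro h
        obtain ⟨c, hc⟩ := hdep _ _ h1 h
        exact h2 c hc
      have h24 : α (q 1 3) (q 1 4) = 0 := by have := hint 1 1; linarith
      obtain ⟨μ, hμ⟩ := hdep _ _ h2' h24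
      have h01 := hint 0 1
      rw [hμ, hl3] at h01
      simp only [map_smul, LinearMap.smul_apply, smul_eq_mul] at h01
      have hs := hskew (q 0 3) (q 1 3)
      have hμl : μ = l3 := by
        have hml : (μ - l3) * α (q 0 3) (q 1 3) = 0 := by
          rw [hs] at h01; ring_nf; ring_nf at h01; linarith
        rcases mul_eq_zero.mp hml with h | h
        · linarith
        · exact absurd h h12ne
      exact key l3 hl3.symm (by rw [hμ, hμl])
end
end

section
/- Let D₂ = g₋₁ and D₃ = g₋₁ ⊕ g₋₂ ⊆ g−, and let L : Λ²D₃ → g−/D₃ be the skew-symmetric bilinear map induced by the Lie bracket of g− followed by the quotient projection (the Levi bracket). Then L is surjective and its kernel is exactly the 1-dimensional subspace Λ²D₂ = span{e₁′ ∧ e₂′}. In particular, D₂ is recovered from D₃ as the unique 2-dimensional subspace of D₃ whose second exterior power spans the kernel of L. -/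
noncomputable section

open Module

/-- The bracket of the (2,3,5) symbol algebra `g₋ = ℝ⁵`, in the basis
`e₁, e₂, e₀, e₁′, e₂′` (coordinates `0,…,4`), determined by
`[e₁′,e₂′] = 2e₀`, `[e₀,e₁′] = 3e₁`, `[e₀,e₂′] = 3e₂`, all other brackets zero. -/
def gBr (x y : Fin 5 → ℝ) : Fin 5 → ℝ :=
  ![3 * (x 2 * y 3 - x 3 * y 2), 3 * (x 2 * y 4 - x 4 * y 2),
    2 * (x 3 * y 4 - x 4 * y 3), 0, 0]

/-- `D₂ = g₋₁ = span{e₁′, e₂′}` -/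
def D2 : Submodule ℝ (Fin 5 → ℝ) :=
  Submodule.span ℝ {Pi.single 3 1, Pi.single 4 1}

/-- `D₃ = g₋₁ ⊕ g₋₂ = span{e₀, e₁′, e₂′}` -/
def D3 : Submodule ℝ (Fin 5 → ℝ) :=
  Submodule.span ℝ {Pi.single 2 1, Pi.single 3 1, Pi.single 4 1}

/-- The Levi bracket `L : Λ²D₃ → g₋/D₃` is surjective, with kernel exactly the line
`Λ²D₂ = span{e₁′ ∧ e₂′}`; in particular `D₂` is the unique 2-dimensional subspace of
`D₃` whose second exterior power spans the kernel of `L`.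

Here `Λ²D₃ ≅ ℝ³` via the basis `e₀∧e₁′, e₀∧e₂′, e₁′∧e₂′` (coordinates `0,1,2`), and
`g₋/D₃ ≅ ℝ²` via the coordinates of `e₁, e₂`, so that `L` is represented by the linear
map determined by the projections of the brackets of the basis vectors of `D₃`. -/
theorem levi_bracket_kernel
    (L : (Fin 3 → ℝ) →ₗ[ℝ] (Fin 2 → ℝ))
    (hL0 : L (Pi.single 0 1) =
      ![gBr (Pi.single 2 1) (Pi.single 3 1) 0, gBr (Pi.single 2 1) (Pi.single 3 1) 1])
    (hL1 : L (Pi.single 1 1) =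
      ![gBr (Pi.single 2 1) (Pi.single 4 1) 0, gBr (Pi.single 2 1) (Pi.single 4 1) 1])
    (hL2 : L (Pi.single 2 1) =
      ![gBr (Pi.single 3 1) (Pi.single 4 1) 0, gBr (Pi.single 3 1) (Pi.single 4 1) 1]) :
    -- L is surjective
    Function.Surjective L ∧
    -- the kernel of L is spanned by e₁′ ∧ e₂′
    LinearMap.ker L = Submodule.span ℝ {Pi.single 2 1} ∧
    -- D₂ is the unique 2-dimensional subspace W ⊆ D₃ with Λ²W ⊆ ker L,
    -- i.e. whose pairwise brackets project to zero in g₋/D₃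
    (∀ W : Submodule ℝ (Fin 5 → ℝ), W ≤ D3 → finrank ℝ ↥W = 2 →
      (∀ x ∈ W, ∀ y ∈ W, gBr x y 0 = 0 ∧ gBr x y 1 = 0) → W = D2) := by

  have key : ∀ x : Fin 3 → ℝ, L x = ![3 * x 0, 3 * x 1] := by
    intro x
    have hx : x = x 0 • (Pi.single 0 1 : Fin 3 → ℝ) + x 1 • (Pi.single 1 1 : Fin 3 → ℝ) + x 2 • (Pi.single 2 1 : Fin 3 → ℝ) := by
      funext i; fin_cases i <;> simp [Pi.single_apply]
    rw [hx, map_add, map_add, map_smul, map_smul, map_smul, hL0, hL1, hL2]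
    funext i; fin_cases i <;> simp [gBr, Pi.single_apply] <;> ring
  have hD3mem : ∀ x ∈ D3, x 0 = 0 ∧ x 1 = 0 := by
    intro x hx
    induction hx using Submodule.span_induction with
    | mem z hz =>
      rcases hz with h | h | h <;> subst h <;> constructor <;> simp [Pi.single_apply]
    | zero => simp
    | add a b _ _ ha hb => constructor <;> simp [ha.1, ha.2, hb.1, hb.2]
    | smul c a _ ha => constructor <;> simp [ha.1, ha.2]
  refine ⟨?_, ?_, ?_⟩
  · intro v
    refine ⟨![v 0 / 3, v 1 / 3, 0], ?_⟩
    rw [key]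
    funext i; fin_cases i <;> simp <;> ring
  · ext x
    rw [LinearMap.mem_ker, key, Submodule.mem_span_singleton]
    constructor
    · intro h
      have h0 : (3 : ℝ) * x 0 = 0 := by have := congrFun h 0; simpa using this
      have h1 : (3 : ℝ) * x 1 = 0 := by have := congrFun h 1; simpa using this
      refine ⟨x 2, ?_⟩
      funext i; fin_cases i <;> simp [Pi.single_apply] <;> linarith
    · rintro ⟨c, rfl⟩
      funext i; fin_cases i <;> simp [Pi.single_apply]
  · intro W hWD3 hdim hbr
    have hW2 : ∀ x ∈ W, x 2 = 0 := by
      by_contra h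
      push_neg at h
      obtain ⟨x, hx, hx2⟩ := h
      have hle : W ≤ Submodule.span ℝ {x} := by
        intro y hy
        rw [Submodule.mem_span_singleton]
        refine ⟨y 2 / x 2, ?_⟩
        obtain ⟨hb1, hb2⟩ := hbr x hx y hy
        simp only [gBr] at hb1 hb2
        norm_num at hb1 hb2
        have hy3 : x 2 * y 3 = x 3 * y 2 := by linarith
        have hy4 : x 2 * y 4 = x 4 * y 2 := by linarith
        funext i
        fin_cases i
        · simp [(hD3mem y (hWD3 hy)).1, (hD3mem x (hWD3 hx)).1]
        · simp [(hD3mem y (hWD3 hy)).2, (hD3mem x (hWD3 hx)).2]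
        · show y 2 / x 2 * x 2 = y 2; field_simp
        · show y 2 / x 2 * x 3 = y 3; field_simp; linarith [hy3]
        · show y 2 / x 2 * x 4 = y 4; field_simp; linarith [hy4]
      have h1 : finrank ℝ W ≤ finrank ℝ (Submodule.span ℝ {x}) :=
        Submodule.finrank_mono hle
      have hx0 : x ≠ 0 := fun h => hx2 (by rw [h]; rfl)
      have h2 : finrank ℝ (Submodule.span ℝ {x}) = 1 := finrank_span_singleton hx0
      omega
    have hWle : W ≤ D2 := by
      intro y hy
      have h2 := hW2 y hy
      have h01 := hD3mem y (hWD3 hy)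
      have : y = y 3 • (Pi.single 3 1 : Fin 5 → ℝ) + y 4 • (Pi.single 4 1 : Fin 5 → ℝ) := by
        funext i; fin_cases i <;> simp [Pi.single_apply, h2, h01.1, h01.2]
      rw [this]
      exact add_mem (Submodule.smul_mem _ _ (Submodule.subset_span (by simp)))
        (Submodule.smul_mem _ _ (Submodule.subset_span (by simp)))
    have hli : LinearIndependent ℝ ![(Pi.single 3 1 : Fin 5 → ℝ), Pi.single 4 1] := by
      rw [LinearIndependent.pair_iff]
      intro s t h
      constructor
      · have := congrFun h 3; simpa using this
      · have := congrFun h 4; simpa using this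
    have hD2r : finrank ℝ D2 = 2 := by
      have heq : D2 = Submodule.span ℝ
          (Set.range ![(Pi.single 3 1 : Fin 5 → ℝ), Pi.single 4 1]) := by
        rw [D2]
        congr 1
        rw [Matrix.range_cons, Matrix.range_cons, Matrix.range_empty]; simp [Set.pair_comm]
      rw [heq, finrank_span_eq_card hli]
      simp
    exact Submodule.eq_of_le_of_finrank_eq hWle (by rw [hdim, hD2r])
end
end
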